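/- arXiv:1608.04319 — 4 statements merged into one kernel-verified Lean document; each statement's English description precedes it below -/
import Mathlib

section
/- Let G be a finite simple graph with n vertices and m edges. Then NK(T1(G)) = 2^(n+m) · NK(G). -/
/-!
In `T₁(G)` a vertex `v` of `G` keeps its `G`-neighbours and is joined in addition to the
`deg v` edges incident with it, so its degree doubles; a vertex coming from an edge is joined
exactly to the two endpoints of that edge. So every vertex and every edge of `G`
contributes one factor `2` to the product of degrees.
-/

open Finset

variable {V : Type*}

/-- The Narumi–Katayama index: the product of the degrees of all vertices. -/
def NK {W : Type*} [Fintype W] (H : SimpleGraph W) [DecidableRel H.Adj] : ℕ :=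
  ∏ v, H.degree v

/-- The first Zagreb index: the sum of the squares of the degrees. -/
def M1 [Fintype V] (G : SimpleGraph V) [DecidableRel G.Adj] : ℕ :=
  ∑ v, (G.degree v) ^ 2

/-- The multiplicative sum Zagreb index: the product over the edges of `G` of the
sum of the degrees of the two endpoints. -/
def Pi1Star [Fintype V] [DecidableEq V] (G : SimpleGraph V) [DecidableRel G.Adj] : ℕ :=
  ∏ e ∈ G.edgeFinset,
    Sym2.lift ⟨fun u v => G.degree u + G.degree v, fun u v => by simp [Nat.add_comm]⟩ e

/-- A generic transformation graph on the vertex set `V(G) ∪ E(G)`, built from a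
symmetric irreflexive relation `Rvv` between vertices, a symmetric irreflexive relation
`Ree` between edges, and an incidence relation `Rve` between vertices and edges. -/
def transGraph (G : SimpleGraph V) (Rvv : V → V → Prop) (Ree : Sym2 V → Sym2 V → Prop)
    (Rve : V → Sym2 V → Prop)
    (hvv : Symmetric Rvv) (hvv' : Irreflexive Rvv)
    (hee : Symmetric Ree) (hee' : Irreflexive Ree) :
    SimpleGraph (V ⊕ G.edgeSet) where
  Adj a b :=
    match a, b with
    | Sum.inl u, Sum.inl v => Rvv u v
    | Sum.inr e, Sum.inr f => Ree e.1 f.1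
    | Sum.inl u, Sum.inr e => Rve u e.1
    | Sum.inr e, Sum.inl u => Rve u e.1
  symm := by
    refine ⟨?_⟩
    rintro (u | e) (v | f) h
    · exact hvv h
    · exact h
    · exact h
    · exact hee h
  loopless := by
    refine ⟨?_⟩
    rintro (u | e) h
    · exact hvv' u h
    · exact hee' e.1 h

instance transGraph.instDecidableAdj (G : SimpleGraph V) (Rvv : V → V → Prop)
    (Ree : Sym2 V → Sym2 V → Prop) (Rve : V → Sym2 V → Prop)
    (h1 : Symmetric Rvv) (h2 : Irreflexive Rvv) (h3 : Symmetric Ree) (h4 : Irreflexive Ree)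
    [DecidableRel Rvv] [DecidableRel Ree] [∀ u e, Decidable (Rve u e)] :
    DecidableRel (transGraph G Rvv Ree Rve h1 h2 h3 h4).Adj := fun a b =>
  match a, b with
  | Sum.inl u, Sum.inl v => inferInstanceAs (Decidable (Rvv u v))
  | Sum.inr e, Sum.inr f => inferInstanceAs (Decidable (Ree e.1 f.1))
  | Sum.inl u, Sum.inr e => inferInstanceAs (Decidable (Rve u e.1))
  | Sum.inr e, Sum.inl u => inferInstanceAs (Decidable (Rve u e.1))

/-- Two edges (as elements of `Sym2 V`) are adjacent: distinct and sharing an endpoint. -/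
abbrev shareRel : Sym2 V → Sym2 V → Prop := fun e f => e ≠ f ∧ ∃ w, w ∈ e ∧ w ∈ f

lemma shareRel_symm : Symmetric (shareRel (V := V)) :=
  fun _ _ h => ⟨h.1.symm, h.2.imp fun _ hw => ⟨hw.2, hw.1⟩⟩

lemma shareRel_irrefl : Irreflexive (shareRel (V := V)) := fun _ h => h.1 rfl

/-- Two edges are "non-adjacent": distinct and sharing no endpoint. -/
abbrev coshareRel : Sym2 V → Sym2 V → Prop := fun e f => e ≠ f ∧ ∀ w, w ∈ e → w ∉ f

lemma coshareRel_symm : Symmetric (coshareRel (V := V)) :=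
  fun _ _ h => ⟨h.1.symm, fun w hf he => h.2 w he hf⟩

lemma coshareRel_irrefl : Irreflexive (coshareRel (V := V)) := fun _ h => h.1 rfl

/-- Non-adjacency of distinct vertices. -/
abbrev coAdj (G : SimpleGraph V) : V → V → Prop := fun u v => u ≠ v ∧ ¬ G.Adj u v

lemma coAdj_symm (G : SimpleGraph V) : Symmetric (coAdj G) :=
  fun _ _ h => ⟨h.1.symm, fun ha => h.2 ha.symm⟩

lemma coAdj_irrefl (G : SimpleGraph V) : Irreflexive (coAdj G) := fun _ h => h.1 rfl

variable [Fintype V] [DecidableEq V]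

/-- The semitotal-point graph `T₁(G)`: vertices adjacent as in `G`, edges never adjacent, a vertex adjacent to an edge iff incident. -/
abbrev T1 (G : SimpleGraph V) [DecidableRel G.Adj] : SimpleGraph (V ⊕ G.edgeSet) :=
  transGraph G G.Adj (fun _ _ => False) (fun u e => u ∈ e)
    (show Symmetric G.Adj from fun _ _ h => h.symm) (show Irreflexive G.Adj from fun _ h => G.irrefl h)
    (show Symmetric (fun _ _ : Sym2 V => False) from fun _ _ h => h.elim)
    (show Irreflexive (fun _ _ : Sym2 V => False) from fun _ h => h)

section transGraph

variable (G : SimpleGraph V) [DecidableRel G.Adj] {Rvv : V → V → Prop}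
  {Ree : Sym2 V → Sym2 V → Prop} {Rve : V → Sym2 V → Prop} {hvv : Symmetric Rvv}
  {hvv' : Irreflexive Rvv} {hee : Symmetric Ree} {hee' : Irreflexive Ree}
  [DecidableRel Rvv] [DecidableRel Ree] [∀ u e, Decidable (Rve u e)]

omit [DecidableEq V] in
lemma transGraph_degree_inl (u : V) :
    (transGraph G Rvv Ree Rve hvv hvv' hee hee').degree (.inl u) =
      #{v | Rvv u v} + #({e | Rve u e.1} : Finset G.edgeSet) := by
  rw [← SimpleGraph.card_neighborFinset_eq_degree, ← card_disjSum]
  congr 1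
  ext (v | e) <;> simp only [SimpleGraph.mem_neighborFinset, inl_mem_disjSum, inr_mem_disjSum,
    mem_filter, mem_univ, true_and] <;> rfl

omit [DecidableEq V] in
lemma transGraph_degree_inr (e : G.edgeSet) :
    (transGraph G Rvv Ree Rve hvv hvv' hee hee').degree (.inr e) =
      #{v | Rve v e.1} + #({f | Ree e.1 f.1} : Finset G.edgeSet) := by
  rw [← SimpleGraph.card_neighborFinset_eq_degree, ← card_disjSum]
  congr 1
  ext (v | f) <;> simp only [SimpleGraph.mem_neighborFinset, inl_mem_disjSum, inr_mem_disjSum,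
    mem_filter, mem_univ, true_and] <;> rfl

end transGraph

lemma Sym2.card_filter_mem_of_not_isDiag {e : Sym2 V} (he : ¬e.IsDiag) : #{v | v ∈ e} = 2 := by
  rw [← Sym2.card_toFinset_of_not_isDiag e he]
  congr 1
  ext
  simp only [mem_filter, mem_univ, true_and, Sym2.mem_toFinset]

lemma SimpleGraph.card_filter_mem_edgeSet (G : SimpleGraph V) [DecidableRel G.Adj] (v : V) :
    #({e | v ∈ e.1} : Finset G.edgeSet) = G.degree v := by
  rw [← G.card_incidenceSet_eq_degree, ← Fintype.card_subtype]
  exact Fintype.card_congr (Equiv.subtypeSubtypeEquivSubtypeInter _ (v ∈ ·))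

lemma T1_degree_inl (G : SimpleGraph V) [DecidableRel G.Adj] (v : V) :
    (T1 G).degree (.inl v) = 2 * G.degree v := by
  rw [transGraph_degree_inl, ← G.neighborFinset_eq_filter, G.card_neighborFinset_eq_degree,
    G.card_filter_mem_edgeSet, two_mul]

lemma T1_degree_inr (G : SimpleGraph V) [DecidableRel G.Adj] (e : G.edgeSet) :
    (T1 G).degree (.inr e) = 2 := by
  rw [transGraph_degree_inr, Sym2.card_filter_mem_of_not_isDiag (G.not_isDiag_of_mem_edgeSet e.2),
    filter_false, card_empty]

theorem stmt_0 (G : SimpleGraph V) [DecidableRel G.Adj] :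
    NK (T1 G) = 2 ^ (Fintype.card V + G.edgeFinset.card) * NK G := by
  simp only [NK, Fintype.prod_sum_type, T1_degree_inl, T1_degree_inr, prod_mul_distrib,
    prod_const, card_univ, pow_add, SimpleGraph.edgeFinset_card]
  ring
end

section
/- Let G be a finite simple graph with n vertices and m edges. Then NK(G^{+++}) = 2^n · NK(G) · Π1*(G). -/
open Finset

variable {V : Type*}

variable [Fintype V] [DecidableEq V]

/-- The total transformation graph `G^{+++}`. -/
abbrev Gppp (G : SimpleGraph V) [DecidableRel G.Adj] : SimpleGraph (V ⊕ G.edgeSet) :=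
  transGraph G G.Adj shareRel (fun u e => u ∈ e)
    (fun _ _ h => h.symm) (fun _ h => G.irrefl h) shareRel_symm shareRel_irrefl

instance Gppp.instDecidableAdj (G : SimpleGraph V) [DecidableRel G.Adj] :
    DecidableRel (Gppp G).Adj :=
  transGraph.instDecidableAdj G G.Adj shareRel (fun u e => u ∈ e) _ _ _ _

/-
In `G^{+++}` a vertex `u` is adjacent to its `deg u` neighbours and to its `deg u` incident
edges, so its degree is `2 deg u`. An edge `ab` is adjacent to its two endpoints and to the
`deg a + deg b - 2` other edges through `a` or `b` (only `ab` itself passes through both), so its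
degree is `deg a + deg b`. Taking the product over `V(G) ⊔ E(G)` gives the formula.
-/

namespace SimpleGraph

lemma degree_sum_type {α β : Type*} [Fintype α] [Fintype β] (H : SimpleGraph (α ⊕ β))
    [DecidableRel H.Adj] (x : α ⊕ β) :
    H.degree x = #{a | H.Adj x (.inl a)} + #{b | H.Adj x (.inr b)} := by
  rw [← card_neighborFinset_eq_degree, neighborFinset_eq_filter]
  simp only [card_filter, Fintype.sum_sum_type]

lemma card_filter_edgeSet {W : Type*} (G : SimpleGraph W) [Fintype G.edgeSet]
    (p : Sym2 W → Prop) [DecidablePred p] :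
    #{e : G.edgeSet | p e} = #{e ∈ G.edgeFinset | p e} := by
  simp only [card_filter]
  exact (sum_subtype _ (fun _ => mem_edgeFinset) fun e => if p e then 1 else 0).symm

lemma card_filter_shareRel_add_two (G : SimpleGraph V) [DecidableRel G.Adj] {a b : V}
    (h : G.Adj a b) :
    #{f ∈ G.edgeFinset | shareRel s(a, b) f} + 2 = G.degree a + G.degree b := by
  have hfilter : {f ∈ G.edgeFinset | shareRel s(a, b) f} =
      (G.incidenceFinset a ∪ G.incidenceFinset b).erase s(a, b) := by
    ext f
    simp only [incidenceFinset_eq_filter, mem_filter, mem_erase, mem_union]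
    grind
  have hinter : G.incidenceFinset a ∩ G.incidenceFinset b = {s(a, b)} := by
    simpa [← coe_inj] using G.incidenceSet_inter_incidenceSet_of_adj h
  have hmem : s(a, b) ∈ G.incidenceFinset a ∪ G.incidenceFinset b := by
    simp [(G.mk'_mem_incidenceSet_left_iff).2 h]
  rw [← card_incidenceFinset_eq_degree, ← card_incidenceFinset_eq_degree,
    ← card_union_add_card_inter, hinter, card_singleton, hfilter, ← card_erase_add_one hmem]

end SimpleGraph

open SimpleGraph

lemma degree_Gppp_inl (G : SimpleGraph V) [DecidableRel G.Adj] (u : V) :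
    (Gppp G).degree (.inl u) = 2 * G.degree u := by
  rw [degree_sum_type]
  change #{v | G.Adj u v} + #{e : G.edgeSet | u ∈ (e : Sym2 V)} = _
  rw [card_filter_edgeSet G (u ∈ ·), ← incidenceFinset_eq_filter, card_incidenceFinset_eq_degree,
    ← neighborFinset_eq_filter, card_neighborFinset_eq_degree, two_mul]

lemma degree_Gppp_inr (G : SimpleGraph V) [DecidableRel G.Adj] (a b : V)
    (h : s(a, b) ∈ G.edgeSet) :
    (Gppp G).degree (.inr ⟨s(a, b), h⟩) = G.degree a + G.degree b := by
  have hends : #{v | v ∈ s(a, b)} = 2 := by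
    have : ({v | v ∈ s(a, b)} : Finset V) = {a, b} := by ext; simp
    rw [this, card_pair (G.mem_edgeSet.1 h).ne]
  rw [degree_sum_type]
  change #{v | v ∈ s(a, b)} + #{f : G.edgeSet | shareRel s(a, b) f} = _
  rw [hends, card_filter_edgeSet G (shareRel s(a, b)), add_comm,
    card_filter_shareRel_add_two G h]

theorem stmt_6 (G : SimpleGraph V) [DecidableRel G.Adj] :
    NK (Gppp G) = 2 ^ Fintype.card V * NK G * Pi1Star G := by
  have hedges : ∏ e : G.edgeSet, (Gppp G).degree (.inr e) = Pi1Star G := by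
    rw [Pi1Star, prod_subtype G.edgeFinset (fun _ => mem_edgeFinset)]
    refine prod_congr rfl fun ⟨e, he⟩ _ => ?_
    induction e using Sym2.ind with
    | h a b => exact degree_Gppp_inr G a b he
  rw [NK, Fintype.prod_sum_type, hedges]
  simp only [degree_Gppp_inl, prod_mul_distrib, prod_const, card_univ, NK]
end

section
/- Let G be a finite simple graph with n vertices and m ≥ 1 edges. Then, as real numbers, NK(G^{++-}) ≤ m^n · (M1(G)/m + (n-4))^m; moreover, equality holds if G is regular. -/
open Finset

variable {V : Type*}

variable [Fintype V] [DecidableEq V]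

/-- The total transformation graph `G^{++-}`. -/
abbrev Gppm (G : SimpleGraph V) [DecidableRel G.Adj] : SimpleGraph (V ⊕ G.edgeSet) :=
  transGraph G G.Adj shareRel (fun u e => u ∉ e)
    (fun _ _ h => h.symm) (fun _ h => h.ne rfl) shareRel_symm shareRel_irrefl

instance Gppm.instDecidableAdj (G : SimpleGraph V) [DecidableRel G.Adj] :
    DecidableRel (Gppm G).Adj :=
  transGraph.instDecidableAdj _ _ _ _ _ _ _ _

/-! In `G^{++-}` a vertex `v` is adjacent to its `d(v)` neighbours and to the `m - d(v)` edges
avoiding it, so every vertex has degree `m`; an edge `uv` is adjacent to the `n - 2` vertices off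
it and to the `d(u) + d(v) - 2` edges meeting it. Hence
`NK(G^{++-}) = m^n ∏_{uv ∈ E} (d(u) + d(v) + n - 4)`, and as `∑_{uv ∈ E} (d(u) + d(v)) = M1(G)`
the bound is AM–GM for these `m` factors, which all equal `2r + n - 4` when `G` is `r`-regular. -/

open SimpleGraph

theorem Real.prod_le_sum_div_card_pow {ι : Type*} (s : Finset ι) (z : ι → ℝ)
    (hz : ∀ i ∈ s, 0 ≤ z i) : ∏ i ∈ s, z i ≤ ((∑ i ∈ s, z i) / #s) ^ #s := by
  obtain rfl | hs := s.eq_empty_or_nonempty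
  · simp
  have hcard : (0 : ℝ) < #s := by exact_mod_cast hs.card_pos
  have hprod : 0 ≤ ∏ i ∈ s, z i := prod_nonneg hz
  have amgm := Real.geom_mean_le_arith_mean_weighted s (fun _ => (#s : ℝ)⁻¹) z
    (fun _ _ => by positivity) (by simp [hcard.ne']) hz
  rw [Real.finsetProd_rpow s z hz, ← mul_sum, inv_mul_eq_div] at amgm
  calc ∏ i ∈ s, z i = ((∏ i ∈ s, z i) ^ (#s : ℝ)⁻¹) ^ #s := by
        rw [← Real.rpow_natCast, ← Real.rpow_mul hprod, inv_mul_cancel₀ hcard.ne',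
          Real.rpow_one]
    _ ≤ _ := by gcongr

theorem Sym2.card_filter_notMem_add_two {α : Type*} [Fintype α] [DecidableEq α] {z : Sym2 α}
    (hz : ¬z.IsDiag) : #{a | a ∉ z} + 2 = Fintype.card α := by
  have hfilter : ({a | a ∈ z} : Finset α) = z.toFinset := by ext; simp
  rw [← card_toFinset_of_not_isDiag z hz, ← hfilter, ← card_univ, add_comm,
    card_filter_add_card_filter_not]

theorem SimpleGraph.sum_edgeFinset_sum_toFinset {M : Type*} [AddCommMonoid M]
    (G : SimpleGraph V) [DecidableRel G.Adj] (f : V → M) :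
    ∑ e ∈ G.edgeFinset, ∑ v ∈ e.toFinset, f v = ∑ v, G.degree v • f v := by
  rw [sum_comm' (t' := univ) (s' := fun v => G.incidenceFinset v)
    (by simp [incidenceFinset_eq_filter, and_comm])]
  simp [card_incidenceFinset_eq_degree]

theorem SimpleGraph.IsRegularOfDegree.sum_toFinset_degree {G : SimpleGraph V}
    [DecidableRel G.Adj] {r : ℕ} (hr : G.IsRegularOfDegree r) {e : Sym2 V} (he : e ∈ G.edgeFinset) :
    ∑ v ∈ e.toFinset, G.degree v = 2 * r := by
  induction e with
  | _ u v => rw [Sym2.toFinset_mk_eq, sum_pair (G.mem_edgeFinset.1 he).ne, hr u, hr v, two_mul]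

omit [DecidableEq V] in
theorem SimpleGraph.card_filter_edgeSet_s9 (G : SimpleGraph V) [DecidableRel G.Adj]
    (p : Sym2 V → Prop) [DecidablePred p] :
    #{f : G.edgeSet | p f} = #{e ∈ G.edgeFinset | p e} := by
  rw [← card_map (Function.Embedding.subtype _)]
  congr 1
  ext e
  simp [and_comm]

theorem SimpleGraph.card_filter_shareRel_add_two_s9 (G : SimpleGraph V) [DecidableRel G.Adj]
    {u v : V} (h : G.Adj u v) :
    #{f ∈ G.edgeFinset | shareRel s(u, v) f} + 2 = G.degree u + G.degree v := by
  have hfilter : {f ∈ G.edgeFinset | shareRel s(u, v) f}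
      = (G.incidenceFinset u ∪ G.incidenceFinset v).erase s(u, v) := by
    ext f
    simp only [mem_filter, mem_erase, mem_union, mem_incidenceFinset, incidenceSet,
      Set.mem_setOf_eq, mem_edgeFinset]
    grind
  have hmem : s(u, v) ∈ G.incidenceFinset u ∪ G.incidenceFinset v :=
    mem_union_left _ ((mem_incidenceFinset _ _ _).2 ⟨G.mem_edgeSet.2 h, Sym2.mem_mk_left u v⟩)
  have hinter : G.incidenceFinset u ∩ G.incidenceFinset v = {s(u, v)} := by
    rw [← coe_inj, coe_inter, coe_incidenceFinset, coe_incidenceFinset,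
      G.incidenceSet_inter_incidenceSet_of_adj h, coe_singleton]
  have hunion := card_union_add_card_inter (G.incidenceFinset u) (G.incidenceFinset v)
  rw [hinter, card_singleton, card_incidenceFinset_eq_degree, card_incidenceFinset_eq_degree,
    ← card_erase_add_one hmem] at hunion
  rw [hfilter]
  omega

section
variable (G : SimpleGraph V) [DecidableRel G.Adj]

theorem neighborFinset_Gppm_inl (v : V) :
    (Gppm G).neighborFinset (.inl v) =
      (G.neighborFinset v).disjSum {e : G.edgeSet | v ∉ e.1} := by
  ext (u | e) <;> simp only [mem_neighborFinset, inl_mem_disjSum, inr_mem_disjSum, mem_filter,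
    mem_univ, true_and] <;> rfl

theorem neighborFinset_Gppm_inr (e : G.edgeSet) :
    (Gppm G).neighborFinset (.inr e) =
      ({u | u ∉ e.1} : Finset V).disjSum {f : G.edgeSet | shareRel e.1 f.1} := by
  ext (u | f) <;> simp only [mem_neighborFinset, inl_mem_disjSum, inr_mem_disjSum, mem_filter,
    mem_univ, true_and] <;> rfl

theorem degree_Gppm_inl (v : V) : (Gppm G).degree (.inl v) = #G.edgeFinset := by
  have hsplit := card_filter_add_card_filter_not (s := G.edgeFinset) (p := (v ∈ ·))
  rw [← incidenceFinset_eq_filter, card_incidenceFinset_eq_degree] at hsplit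
  rw [← card_neighborFinset_eq_degree, neighborFinset_Gppm_inl, card_disjSum,
    card_neighborFinset_eq_degree, card_filter_edgeSet_s9 G (v ∉ ·)]
  omega

theorem degree_Gppm_inr (e : G.edgeSet) :
    (Gppm G).degree (.inr e) + 4 = ∑ v ∈ e.1.toFinset, G.degree v + Fintype.card V := by
  obtain ⟨e, he⟩ := e
  induction e with
  | _ u v =>
    have h : G.Adj u v := G.mem_edgeSet.1 he
    have hvert := Sym2.card_filter_notMem_add_two (Sym2.mk_isDiag_iff.not.2 h.ne)
    have hedge := card_filter_shareRel_add_two_s9 G h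
    rw [← card_neighborFinset_eq_degree, neighborFinset_Gppm_inr, card_disjSum,
      card_filter_edgeSet_s9 G (shareRel s(u, v)), Sym2.toFinset_mk_eq, sum_pair h.ne]
    dsimp only
    omega

theorem cast_degree_Gppm_inr (e : G.edgeSet) :
    ((Gppm G).degree (.inr e) : ℝ) =
      ∑ v ∈ e.1.toFinset, (G.degree v : ℝ) + Fintype.card V - 4 := by
  rw [eq_sub_iff_add_eq]
  exact_mod_cast degree_Gppm_inr G e

theorem NK_Gppm : (NK (Gppm G) : ℝ) = (#G.edgeFinset : ℝ) ^ Fintype.card V *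
    ∏ e ∈ G.edgeFinset, (∑ v ∈ e.toFinset, (G.degree v : ℝ) + Fintype.card V - 4) := by
  rw [NK, Fintype.prod_sum_type, Nat.cast_mul, Nat.cast_prod, Nat.cast_prod]
  simp_rw [degree_Gppm_inl, cast_degree_Gppm_inr]
  rw [prod_const, card_univ, prod_subtype G.edgeFinset (fun _ => mem_edgeFinset)]

theorem sum_edgeFinset_sum_toFinset_degree_add_card_sub_four :
    ∑ e ∈ G.edgeFinset, (∑ v ∈ e.toFinset, (G.degree v : ℝ) + Fintype.card V - 4)
      = M1 G + #G.edgeFinset * ((Fintype.card V : ℝ) - 4) := by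
  rw [sum_sub_distrib, sum_add_distrib, sum_edgeFinset_sum_toFinset, M1]
  push_cast [sum_const, nsmul_eq_mul, sq]
  ring

end

theorem stmt_9_general (G : SimpleGraph V) [DecidableRel G.Adj] :
    (NK (Gppm G) : ℝ) ≤ (G.edgeFinset.card : ℝ) ^ Fintype.card V * ((M1 G : ℝ) / G.edgeFinset.card + ((Fintype.card V : ℝ) - 4)) ^ G.edgeFinset.card ∧
      ((∃ r, G.IsRegularOfDegree r) → (NK (Gppm G) : ℝ) = (G.edgeFinset.card : ℝ) ^ Fintype.card V * ((M1 G : ℝ) / G.edgeFinset.card + ((Fintype.card V : ℝ) - 4)) ^ G.edgeFinset.card) := by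
  -- for `m = 0` the right side is not an AM–GM bound (`M1 / 0 = 0`), but both sides are `0 ^ n`
  obtain hE | hE := G.edgeFinset.eq_empty_or_nonempty
  · simp [NK_Gppm, hE]
  have hm : (#G.edgeFinset : ℝ) ≠ 0 := by exact_mod_cast hE.card_pos.ne'
  have hmean : (∑ e ∈ G.edgeFinset, (∑ v ∈ e.toFinset, (G.degree v : ℝ) + Fintype.card V - 4))
      / #G.edgeFinset = M1 G / #G.edgeFinset + ((Fintype.card V : ℝ) - 4) := by
    rw [sum_edgeFinset_sum_toFinset_degree_add_card_sub_four, add_div,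
      mul_div_cancel_left₀ _ hm]
  rw [NK_Gppm, ← hmean]
  refine ⟨?_, fun ⟨r, hr⟩ => ?_⟩
  · gcongr
    exact Real.prod_le_sum_div_card_pow _ _
      fun e he => cast_degree_Gppm_inr G ⟨e, mem_edgeFinset.1 he⟩ ▸ Nat.cast_nonneg _
  · have hconst : ∀ e ∈ G.edgeFinset,
        ∑ v ∈ e.toFinset, (G.degree v : ℝ) + Fintype.card V - 4 = 2 * r + Fintype.card V - 4 := by
      intro e he
      rw [← Nat.cast_sum, hr.sum_toFinset_degree he, Nat.cast_mul, Nat.cast_two]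
    rw [sum_congr rfl hconst, prod_congr rfl hconst, sum_const, prod_const, nsmul_eq_mul,
      mul_div_cancel_left₀ _ hm]

theorem stmt_9 (G : SimpleGraph V) [DecidableRel G.Adj]
    (hm : 1 ≤ G.edgeFinset.card) :
    (NK (Gppm G) : ℝ) ≤ (G.edgeFinset.card : ℝ) ^ Fintype.card V * ((M1 G : ℝ) / G.edgeFinset.card + ((Fintype.card V : ℝ) - 4)) ^ G.edgeFinset.card ∧
      ((∃ r, G.IsRegularOfDegree r) → (NK (Gppm G) : ℝ) = (G.edgeFinset.card : ℝ) ^ Fintype.card V * ((M1 G : ℝ) / G.edgeFinset.card + ((Fintype.card V : ℝ) - 4)) ^ G.edgeFinset.card) :=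
  stmt_9_general G
end

section
/- Let G be a finite simple graph with n vertices and m edges. Then NK(G^{-++}) = (n-1)^n · Π1*(G). -/
/-!
In `G^{-++}` a vertex `u` of `G` is adjacent to its `n - 1 - d(u)` non-neighbours and to its
`d(u)` incident edges, so it has degree `n - 1`. An edge `uv` is adjacent to its two endpoints
and to the `d(u) + d(v) - 2` other edges at `u` or `v` (its degree in the line graph), so it has
degree `d(u) + d(v)`. Multiplying over vertices and edges gives the formula.
-/

open Finset

variable {V : Type*}

variable [Fintype V] [DecidableEq V]

/-- The total transformation graph `G^{-++}`. -/
abbrev Gmpp (G : SimpleGraph V) [DecidableRel G.Adj] : SimpleGraph (V ⊕ G.edgeSet) :=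
  transGraph G (coAdj G) shareRel (fun u e => u ∈ e)
    (coAdj_symm G) (coAdj_irrefl G) shareRel_symm shareRel_irrefl

namespace SimpleGraph

theorem degree_eq_card_add_card {α β : Type*} [Fintype α] [Fintype β]
    (H : SimpleGraph (α ⊕ β)) [DecidableRel H.Adj] (x : α ⊕ β) :
    H.degree x = Fintype.card {a // H.Adj x (.inl a)} + Fintype.card {b // H.Adj x (.inr b)} := by
  rw [← card_neighborSet_eq_degree, ← Fintype.card_sum]
  exact Fintype.card_congr (Equiv.subtypeSum (p := H.Adj x))

variable (G : SimpleGraph V) [DecidableRel G.Adj]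

theorem card_edgeSet_mem_eq_degree (u : V) :
    Fintype.card {e : G.edgeSet // u ∈ (e : Sym2 V)} = G.degree u := by
  rw [← card_incidenceSet_eq_degree]
  exact Fintype.card_congr <|
    (Equiv.subtypeSubtypeEquivSubtypeInter (· ∈ G.edgeSet) (u ∈ ·)).trans
      (Equiv.subtypeEquivRight fun _ => Iff.rfl)

theorem map_subtype_lineGraph_neighborFinset {a b : V} (h : G.Adj a b)
    [Fintype (G.lineGraph.neighborSet ⟨s(a, b), h⟩)] :
    (G.lineGraph.neighborFinset ⟨s(a, b), h⟩).map (.subtype _) =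
      (G.incidenceFinset a ∪ G.incidenceFinset b).erase s(a, b) := by
  ext f
  simp only [mem_map, mem_neighborFinset, Function.Embedding.coe_subtype, mem_erase, mem_union,
    mem_incidenceFinset, incidenceSet, Set.mem_sep_iff]
  constructor
  · rintro ⟨⟨f, hf⟩, hadj, rfl⟩
    obtain ⟨hne, v, hv, hvf⟩ := lineGraph_adj_iff_exists.mp hadj
    refine ⟨fun hfe => hne (Subtype.ext hfe.symm), ?_⟩
    rcases Sym2.mem_iff.mp hv with rfl | rfl
    exacts [.inl ⟨hf, hvf⟩, .inr ⟨hf, hvf⟩]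
  · have hne' {hf : f ∈ G.edgeSet} (hne : f ≠ s(a, b)) :
        (⟨s(a, b), h⟩ : G.edgeSet) ≠ ⟨f, hf⟩ :=
      fun he => hne (congrArg Subtype.val he).symm
    rintro ⟨hne, ⟨hf, hvf⟩ | ⟨hf, hvf⟩⟩
    · exact ⟨⟨f, hf⟩, lineGraph_adj_iff_exists.mpr ⟨hne' hne, a, Sym2.mem_mk_left a b, hvf⟩,
        rfl⟩
    · exact ⟨⟨f, hf⟩, lineGraph_adj_iff_exists.mpr ⟨hne' hne, b, Sym2.mem_mk_right a b, hvf⟩,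
        rfl⟩

theorem lineGraph_degree_add_two {a b : V} (h : G.Adj a b)
    [Fintype (G.lineGraph.neighborSet ⟨s(a, b), h⟩)] :
    G.lineGraph.degree ⟨s(a, b), h⟩ + 2 = G.degree a + G.degree b := by
  have hinter : G.incidenceFinset a ∩ G.incidenceFinset b = {s(a, b)} := by
    rw [← coe_inj]
    push_cast
    exact G.incidenceSet_inter_incidenceSet_of_adj h
  have hmem : s(a, b) ∈ G.incidenceFinset a ∪ G.incidenceFinset b := by
    simp [mem_incidenceFinset, h]
  have hcount := card_union_add_card_inter (G.incidenceFinset a) (G.incidenceFinset b)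
  rw [hinter, card_singleton, card_incidenceFinset_eq_degree, card_incidenceFinset_eq_degree,
    ← card_erase_add_one hmem, ← G.map_subtype_lineGraph_neighborFinset h, card_map,
    card_neighborFinset_eq_degree] at hcount
  omega

end SimpleGraph

section TotalTransformation

variable (G : SimpleGraph V) [DecidableRel G.Adj]

theorem degree_Gmpp_inl (u : V) : (Gmpp G).degree (.inl u) = Fintype.card V - 1 := by
  have hcompl : Fintype.card {v // (Gmpp G).Adj (.inl u) (.inl v)} = Gᶜ.degree u := by
    rw [← SimpleGraph.card_neighborSet_eq_degree]
    exact Fintype.card_congr (Equiv.subtypeEquivRight fun _ => Iff.rfl)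
  have hinc : Fintype.card {e // (Gmpp G).Adj (.inl u) (.inr e)} = G.degree u := by
    rw [← G.card_edgeSet_mem_eq_degree u]
    exact Fintype.card_congr (Equiv.subtypeEquivRight fun _ => Iff.rfl)
  have := G.degree_lt_card_verts u
  rw [SimpleGraph.degree_eq_card_add_card, hcompl, hinc, SimpleGraph.degree_compl]
  omega

theorem degree_Gmpp_inr {a b : V} (h : G.Adj a b) :
    (Gmpp G).degree (.inr ⟨s(a, b), h⟩) = G.degree a + G.degree b := by
  classical
  have hends : Fintype.card {v // (Gmpp G).Adj (.inr ⟨s(a, b), h⟩) (.inl v)} = 2 := by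
    rw [Fintype.card_subtype, ← card_pair h.ne]
    congr 1
    ext v
    simp [Gmpp, transGraph]
  have hline : Fintype.card {f // (Gmpp G).Adj (.inr ⟨s(a, b), h⟩) (.inr f)} =
      G.lineGraph.degree ⟨s(a, b), h⟩ := by
    rw [← SimpleGraph.card_neighborSet_eq_degree]
    refine Fintype.card_congr (Equiv.subtypeEquivRight fun _ => ?_)
    rw [SimpleGraph.mem_neighborSet, SimpleGraph.lineGraph_adj_iff_exists, ← Subtype.coe_ne_coe]
    rfl
  rw [SimpleGraph.degree_eq_card_add_card, hends, hline, add_comm]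
  exact G.lineGraph_degree_add_two h

end TotalTransformation

theorem stmt_13 (G : SimpleGraph V) [DecidableRel G.Adj] :
    NK (Gmpp G) = (Fintype.card V - 1) ^ Fintype.card V * Pi1Star G := by
  rw [NK, Pi1Star, Fintype.prod_sum_type, prod_subtype G.edgeFinset fun _ => G.mem_edgeFinset]
  congr 1
  · simp only [degree_Gmpp_inl, prod_const, card_univ]
  · refine Fintype.prod_congr _ _ fun ⟨e, he⟩ => ?_
    induction e using Sym2.ind with
    | _ a b => exact degree_Gmpp_inr G he
end
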